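/- arXiv:1105.4748 — 3 statements merged into one kernel-verified Lean document; each statement's English description precedes it below -/
import Mathlib

section
/- Let D_1,...,D_n be K-derivations of R = K[x_1,...,x_n] with D_i = sum_j a_{ij} ∂/∂x_j forming an R-basis of Der_K(R), and suppose [D_i,D_j] = sum_k c_{ij}^k D_k with all c_{ij}^k ∈ K (so the K-span L of the D_i is a Lie subalgebra). Then for any d ∈ L, the trace of the adjoint operator ad(d) on L equals minus the divergence of d: tr(ad d) = -div(d). -/
/-!
Evaluating `⁅D i, D j⁆ = ∑ k, c i j k • D k` at `X l` gives
`D i (a j l) - D j (a i l) = ∑ k, c i j k * a k l`. Since the `D i` form a basis, each `∂/∂x_l`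
is `∑ j, b l j • D j` for a matrix `b` with `b * a = 1`. Multiplying the relation by `b` and
taking traces, the right side becomes `∑ j, c i j j = tr (ad (D i))`, the second term on the left
becomes `∑ l, ∂(a i l)/∂x_l = div (D i)`, and the first one is `D i (det a) / det a` by Jacobi's
formula, which vanishes because `det a` is a unit of `K[x]`, hence a constant. The theorem
follows by linearity in `d`.
-/

open MvPolynomial

namespace Derivation

section Semiring

variable {R A M : Type*} [CommSemiring R] [CommSemiring A] [Algebra R A] [AddCommMonoid M]
  [Module A M] [Module R M]

@[simp]
theorem sum_apply {ι : Type*} (s : Finset ι) (D : ι → Derivation R A M) (x : A) :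
    (∑ i ∈ s, D i) x = ∑ i ∈ s, D i x :=
  (congrFun (map_sum coeFnAddMonoidHom D s) x).trans (Finset.sum_apply _ _ _)

theorem leibniz_prod {ι : Type*} [DecidableEq ι] (D : Derivation R A M) (s : Finset ι)
    (f : ι → A) : D (∏ i ∈ s, f i) = ∑ i ∈ s, (∏ j ∈ s.erase i, f j) • D (f i) := by
  induction s using Finset.induction_on with
  | empty => simp
  | insert a s ha ih =>
    rw [Finset.prod_insert ha, leibniz, ih, Finset.sum_insert ha, Finset.erase_insert ha,
      Finset.smul_sum, add_comm]
    refine congrArg _ (Finset.sum_congr rfl fun i hi => ?_)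
    rw [Finset.erase_insert_of_ne (ne_of_mem_of_not_mem hi ha).symm,
      Finset.prod_insert fun h => ha (Finset.mem_of_mem_erase h), mul_smul]

end Semiring

variable {R A : Type*} [CommSemiring R] [CommRing A] [Algebra R A]
  {n : Type*} [Fintype n] [DecidableEq n]

theorem map_det (D : Derivation R A A) (M : Matrix n n A) :
    D M.det = (M.adjugate * M.map D).trace := by
  have hcol : ∀ σ : Equiv.Perm n, ∀ i, (∏ j ∈ Finset.univ.erase i, M (σ j) j) • D (M (σ i) i) =
      ∏ j, M.updateCol i (fun r => D (M r i)) (σ j) j := by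
    intro σ i
    rw [← Finset.prod_erase_mul _ _ (Finset.mem_univ i), Matrix.updateCol_self, smul_eq_mul]
    refine congrArg (· * _) (Finset.prod_congr rfl fun j hj => ?_)
    rw [Matrix.updateCol_ne (Finset.ne_of_mem_erase hj)]
  calc D M.det
      = ∑ i, (M.updateCol i fun r => D (M r i)).det := by
        simp only [Matrix.det_apply, map_sum, Units.smul_def, map_zsmul, leibniz_prod, hcol,
          Finset.smul_sum]
        exact Finset.sum_comm
    _ = (M.adjugate * M.map D).trace := by
        simp only [← Matrix.cramer_apply, Matrix.cramer_eq_adjugate_mulVec, Matrix.trace,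
          Matrix.diag, Matrix.mul_apply, Matrix.mulVec, dotProduct, Matrix.map_apply]

theorem trace_map_mul_eq_zero_of_mul_eq_one (D : Derivation R A A) {M N : Matrix n n A}
    (h : N * M = 1) (hD : D M.det = 0) : (M.map D * N).trace = 0 := by
  have hadj : M.adjugate = M.det • N :=
    calc M.adjugate = M.adjugate * (M * N) := by rw [mul_eq_one_comm.mp h, mul_one]
      _ = M.det • N := by rw [← Matrix.mul_assoc, Matrix.adjugate_mul, Matrix.smul_mul,
        Matrix.one_mul]
  have h0 := D.map_det M
  rw [hD, hadj, Matrix.smul_mul, Matrix.trace_smul, smul_eq_mul, Matrix.trace_mul_comm] at h0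
  exact (Matrix.isUnit_det_of_left_inverse h).mul_right_eq_zero.mp h0.symm

theorem sum_structConst_diag_eq_neg_divergence {ι : Type*} [Fintype ι] [DecidableEq ι]
    (D P : ι → Derivation R A A) (a b : Matrix ι ι A) (c : ι → ι → ι → A)
    (hba : b * a = 1) (hdet : ∀ i, D i a.det = 0) (hP : ∀ l, P l = ∑ j, b l j • D j)
    (hbracket : ∀ i j l, D i (a j l) - D j (a i l) = ∑ k, c i j k * a k l) (i : ι) :
    ∑ j, c i j j = -∑ l, P l (a i l) := by
  set N : Matrix ι ι A := Matrix.of fun j l => D j (a i l)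
  have hsplit : a.map (D i) - N = Matrix.of (c i) * a := by
    ext j l
    simp [N, Matrix.mul_apply, hbracket]
  have hN : (N * b).trace = ∑ l, P l (a i l) := by
    simp only [N, Matrix.trace, Matrix.diag, Matrix.mul_apply, Matrix.of_apply, hP, sum_apply,
      smul_apply, smul_eq_mul]
    rw [Finset.sum_comm]
    simp_rw [mul_comm]
  calc ∑ j, c i j j = (Matrix.of (c i) * a * b).trace := by
        rw [Matrix.mul_assoc, mul_eq_one_comm.mp hba, Matrix.mul_one]; rfl
    _ = (a.map (D i) * b).trace - (N * b).trace := by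
        rw [← hsplit, Matrix.sub_mul, Matrix.trace_sub]
    _ = -∑ l, P l (a i l) := by
        rw [(D i).trace_map_mul_eq_zero_of_mul_eq_one hba (hdet i), hN, zero_sub]

end Derivation

namespace MvPolynomial

theorem derivation_eq_zero_of_isUnit {σ R M : Type*} [CommRing R] [IsReduced R]
    [AddCommMonoid M] [Module (MvPolynomial σ R) M] [Module R M]
    (D : Derivation R (MvPolynomial σ R) M) {p : MvPolynomial σ R} (hp : IsUnit p) : D p = 0 := by
  obtain ⟨r, -, rfl⟩ := isUnit_iff_eq_C_of_isReduced.mp hp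
  exact D.map_algebraMap r

theorem mul_eq_one_of_pderiv_eq_sum {σ ι R : Type*} [CommSemiring R] [Fintype ι]
    [DecidableEq σ] (D : ι → Derivation R (MvPolynomial σ R) (MvPolynomial σ R))
    (a : Matrix ι σ (MvPolynomial σ R)) (b : Matrix σ ι (MvPolynomial σ R))
    (ha : ∀ j m, D j (X m) = a j m) (hb : ∀ l, pderiv l = ∑ j, b l j • D j) : b * a = 1 := by
  refine Matrix.ext fun l m => ?_
  simpa [pderiv_X, Pi.single_apply, Matrix.one_apply, Matrix.mul_apply, ha, eq_comm]
    using (congrArg (· (X m)) (hb l)).symm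

end MvPolynomial

theorem stmt1_general (n : ℕ) (K : Type*) [Field K]
    (D : Fin n → Derivation K (MvPolynomial (Fin n) K) (MvPolynomial (Fin n) K))
    (a : Matrix (Fin n) (Fin n) (MvPolynomial (Fin n) K))
    (hD : ∀ i, D i = ∑ j, a i j • (pderiv j :
      Derivation K (MvPolynomial (Fin n) K) (MvPolynomial (Fin n) K)))
    (B : Module.Basis (Fin n) (MvPolynomial (Fin n) K)
      (Derivation K (MvPolynomial (Fin n) K) (MvPolynomial (Fin n) K)))
    (hB : ∀ i, B i = D i)
    (c : Fin n → Fin n → Fin n → K)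
    (hc : ∀ i j, ⁅D i, D j⁆ = ∑ k, (MvPolynomial.C (c i j k) : MvPolynomial (Fin n) K) • D k)
    (lam : Fin n → K) :
    MvPolynomial.C (∑ j, ∑ i, lam i * c i j j) =
      - ∑ j, pderiv j (∑ i, MvPolynomial.C (lam i) * a i j) := by
  have hX : ∀ i l, D i (X l) = a i l := fun i l => by
    simp [hD i, pderiv_X, Pi.single_apply]
  let b : Matrix (Fin n) (Fin n) (MvPolynomial (Fin n) K) := Matrix.of fun l => B.repr (pderiv l)
  have hP : ∀ l, pderiv l = ∑ j, b l j • D j := fun l => by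
    simp only [b, Matrix.of_apply, ← hB, B.sum_repr]
  have hba : b * a = 1 := mul_eq_one_of_pderiv_eq_sum D a b hX hP
  have hbracket : ∀ i j l, D i (a j l) - D j (a i l) = ∑ k, C (c i j k) * a k l := by
    intro i j l
    simpa [Derivation.commutator_apply, hX] using congrArg (· (X l)) (hc i j)
  have htrace := Derivation.sum_structConst_diag_eq_neg_divergence D pderiv a b _ hba
    (fun i => derivation_eq_zero_of_isUnit (D i) (Matrix.isUnit_det_of_left_inverse hba)) hP
    hbracket
  calc C (∑ j, ∑ i, lam i * c i j j) = ∑ i, C (lam i) * ∑ j, C (c i j j) := by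
        simp only [map_sum, map_mul, Finset.mul_sum]
        exact Finset.sum_comm
    _ = -∑ j, pderiv j (∑ i, C (lam i) * a i j) := by
        simp only [htrace, map_sum, pderiv_C_mul, mul_neg, Finset.mul_sum, Finset.sum_neg_distrib]
        rw [Finset.sum_comm]

/-- Let `{D_1, ..., D_n}` be an `R`-basis of the module of `K`-derivations of
`R = K[x_1, ..., x_n]` with `D_i = ∑ j, a i j • ∂/∂x_j`, whose brackets satisfy
`⁅D i, D j⁆ = ∑ k, c i j k • D k` with constants `c i j k ∈ K` (so the `K`-span of
the `D i` is a Lie subalgebra `L`).  For any `d = ∑ i, lam i • D i ∈ L`, the trace of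
`ad d` on `L` (computed in the basis `D`, namely `∑ j ∑ i, lam i * c i j j`) equals minus the
divergence of `d`. -/
theorem stmt1 (n : ℕ) (K : Type*) [Field K] [CharZero K]
    (D : Fin n → Derivation K (MvPolynomial (Fin n) K) (MvPolynomial (Fin n) K))
    (a : Matrix (Fin n) (Fin n) (MvPolynomial (Fin n) K))
    (hD : ∀ i, D i = ∑ j, a i j • (pderiv j :
      Derivation K (MvPolynomial (Fin n) K) (MvPolynomial (Fin n) K)))
    (B : Module.Basis (Fin n) (MvPolynomial (Fin n) K)
      (Derivation K (MvPolynomial (Fin n) K) (MvPolynomial (Fin n) K)))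
    (hB : ∀ i, B i = D i)
    (c : Fin n → Fin n → Fin n → K)
    (hc : ∀ i j, ⁅D i, D j⁆ = ∑ k, (MvPolynomial.C (c i j k) : MvPolynomial (Fin n) K) • D k)
    (lam : Fin n → K) :
    MvPolynomial.C (∑ j, ∑ i, lam i * c i j j) =
      - ∑ j, pderiv j (∑ i, MvPolynomial.C (lam i) * a i j) :=
  stmt1_general n K D a hD B hB c hc lam
end

section
/- If L is a basic Lie subalgebra of W_n(K) that is nilpotent as a Lie algebra, then every element D of L has divergence zero, i.e., L ⊆ SW_n(K). -/
/-!
Let `v₁, …, vₙ` be a `K`-basis of `L` that is also a basis of the free `K[x]`-module of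
derivations, and `F = (vᵢ xⱼ)`. Since `F` is invertible over `K[x]`, `det F` is a nonzero
constant, so `D (det F) = 0` for every derivation `D`. For `D ∈ L` the entries of `F` satisfy
`D F = A F + F J`, where `A` is the transposed matrix of `ad D` in the basis `vᵢ` and
`J = (∂ₖ (D xⱼ))`; by Jacobi's formula `D (det F) = (tr A + tr J) det F`. Hence
`tr (ad D) = -div D`, and the trace of `ad D` vanishes when `L` is nilpotent.
-/

open MvPolynomial

namespace Derivation

variable {R A : Type*} [CommRing R] [CommRing A] [Algebra R A]

theorem finsetSum_apply {M : Type*} [AddCommGroup M] [Module A M] [Module R M]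
    {ι : Type*} (s : Finset ι) (f : ι → Derivation R A M) (a : A) :
    (∑ i ∈ s, f i) a = ∑ i ∈ s, f i a := by
  simpa only [coeFnAddMonoidHom_apply, Finset.sum_apply] using
    congrFun (map_sum coeFnAddMonoidHom f s) a

variable (D : Derivation R A A)

theorem apply_prod {ι : Type*} [DecidableEq ι] (s : Finset ι) (f : ι → A) :
    D (∏ i ∈ s, f i) = ∑ i ∈ s, D (f i) * ∏ j ∈ s.erase i, f j := by
  induction s using Finset.induction_on with
  | empty => simp
  | insert a t ha ih =>
    rw [Finset.prod_insert ha, leibniz, smul_eq_mul, smul_eq_mul, ih,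
      Finset.sum_insert ha, Finset.erase_insert ha, Finset.mul_sum, add_comm]
    congr 1
    · ring
    · refine Finset.sum_congr rfl fun i hi => ?_
      have hia : i ≠ a := fun h => ha (h ▸ hi)
      rw [Finset.erase_insert_of_ne hia.symm,
        Finset.prod_insert fun h => ha (Finset.erase_subset _ _ h)]
      ring

variable {n : Type*} [DecidableEq n] [Fintype n]

theorem apply_det (F : Matrix n n A) :
    D F.det = ∑ r, (F.updateRow r fun j => D (F r j)).det := by
  simp only [Matrix.det_apply]
  rw [map_sum, Finset.sum_comm]
  refine Finset.sum_congr rfl fun σ _ => ?_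
  rw [Units.smul_def, map_zsmul, ← Units.smul_def, apply_prod,
    ← Equiv.sum_comp σ (fun r => Equiv.Perm.sign σ •
      ∏ i, (F.updateRow r fun j => D (F r j)) (σ i) i), ← Finset.smul_sum]
  congr 1
  refine Finset.sum_congr rfl fun i _ => ?_
  rw [← Finset.mul_prod_erase Finset.univ _ (Finset.mem_univ i)]
  congr 1
  · rw [Matrix.updateRow_self]
  · refine Finset.prod_congr rfl fun k hk => ?_
    rw [Matrix.updateRow_ne]
    exact fun h => (Finset.ne_of_mem_erase hk) (σ.injective h)

theorem apply_det_of_apply_eq_mul {F P : Matrix n n A} (h : ∀ i j, D (F i j) = (P * F) i j) :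
    D F.det = P.trace * F.det := by
  rw [apply_det, Matrix.trace, Finset.sum_mul]
  refine Finset.sum_congr rfl fun r _ => ?_
  have hrow : (fun j => D (F r j)) = ∑ k, P r k • F k := by
    ext j
    simp [h, Matrix.mul_apply]
  rw [hrow, Matrix.det_updateRow_sum, smul_eq_mul, Matrix.diag_apply]

end Derivation

theorem LieSubalgebra.coe_derivation_apply_eq_sum_repr {K A : Type*} [CommRing K] [CommRing A]
    [Algebra K A] {L : LieSubalgebra K (Derivation K A A)} {ι : Type*} [Fintype ι]
    (v : Module.Basis ι K L) (x : L) (a : A) :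
    (x : Derivation K A A) a = ∑ k, algebraMap K A (v.repr x k) * (v k : Derivation K A A) a := by
  conv_lhs => rw [← v.sum_repr x]
  rw [AddSubmonoidClass.coe_finsetSum, Derivation.finsetSum_apply]
  simp only [SetLike.val_smul, Derivation.smul_apply, Algebra.smul_def]

namespace MvPolynomial

variable {R : Type*} [CommRing R] {σ : Type*}

noncomputable def derivationEquivPi :
    Derivation R (MvPolynomial σ R) (MvPolynomial σ R) ≃ₗ[MvPolynomial σ R]
      (σ → MvPolynomial σ R) where
  toFun E j := E (X j)
  map_add' _ _ := rfl
  map_smul' _ _ := rfl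
  invFun := mkDerivation R
  left_inv _ := derivation_ext fun i => mkDerivation_X R _ i
  right_inv f := _root_.funext (mkDerivation_X R f)

variable [Fintype σ]

theorem isUnit_det_of_basis [DecidableEq σ]
    (B : Module.Basis σ (MvPolynomial σ R) (Derivation R (MvPolynomial σ R) (MvPolynomial σ R))) :
    IsUnit (Matrix.of fun i j => B i (X j)).det := by
  have h := (Pi.basisFun _ σ).isUnit_det (B.map derivationEquivPi)
  rwa [Pi.basisFun_det_apply] at h

theorem derivation_apply_eq_sum_pderiv
    (E : Derivation R (MvPolynomial σ R) (MvPolynomial σ R)) (p : MvPolynomial σ R) :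
    E p = ∑ k, E (X k) * pderiv k p := by
  classical
  have hE : E = ∑ k, E (X k) • pderiv k := derivation_ext fun i => by
    simp [Derivation.finsetSum_apply, pderiv_X, Pi.single_apply]
  conv_lhs => rw [hE]
  simp [Derivation.finsetSum_apply]

noncomputable def divergence (D : Derivation R (MvPolynomial σ R) (MvPolynomial σ R)) :
    MvPolynomial σ R :=
  ∑ j, pderiv j (D (X j))

end MvPolynomial

section BasicSubalgebra

variable {K : Type*} [Field K] {σ : Type*} [Fintype σ] [DecidableEq σ]

local notation "W" => Derivation K (MvPolynomial σ K) (MvPolynomial σ K)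

theorem C_trace_ad_eq_neg_divergence {L : LieSubalgebra K W} (v : Module.Basis σ K L)
    (B : Module.Basis σ (MvPolynomial σ K) W) (hB : ∀ i, B i = v i) (D : L) :
    C (LinearMap.trace K L (LieAlgebra.ad K L D)) = -divergence (D : W) := by
  set F : Matrix σ σ (MvPolynomial σ K) := Matrix.of fun i j => (v i : W) (X j)
  have hF : IsUnit F.det := by simpa only [hB] using isUnit_det_of_basis B
  set A := (LinearMap.toMatrix v v (LieAlgebra.ad K L D)).transpose.map C
  set J : Matrix σ σ (MvPolynomial σ K) := Matrix.of fun k j => pderiv k ((D : W) (X j))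
  have hDF : ∀ i j, (D : W) (F i j) = ((A + F * J * F⁻¹) * F : Matrix σ σ _) i j := by
    intro i j
    have hbracket : (D : W) (F i j) = ((⁅D, v i⁆ : L) : W) (X j) + (v i : W) ((D : W) (X j)) := by
      rw [LieSubalgebra.coe_bracket, Derivation.commutator_apply, sub_add_cancel]
      rfl
    rw [add_mul, Matrix.nonsing_inv_mul_cancel_right F _ hF, hbracket,
      LieSubalgebra.coe_derivation_apply_eq_sum_repr v, derivation_apply_eq_sum_pderiv]
    simp [Matrix.mul_apply, A, J, F, LinearMap.toMatrix_apply, LieAlgebra.ad_apply]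
  have hconst : (D : W) F.det = 0 := by
    obtain ⟨c, -, hc⟩ := isUnit_iff_eq_C_of_isReduced.mp hF
    rw [hc, derivation_C]
  have htrace : (A + F * J * F⁻¹).trace = 0 := by
    have h := Derivation.apply_det_of_apply_eq_mul _ hDF
    rw [hconst, eq_comm] at h
    exact (mul_eq_zero.mp h).resolve_right hF.ne_zero
  rw [Matrix.trace_add, Matrix.trace_mul_comm, Matrix.nonsing_inv_mul_cancel_left F _ hF] at htrace
  rw [LinearMap.trace_eq_matrix_trace K v, ← Matrix.trace_transpose, AddMonoidHom.map_trace]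
  exact eq_neg_of_add_eq_zero_left htrace

end BasicSubalgebra

theorem stmt2_general (n : ℕ) (K : Type*) [Field K]
    (L : LieSubalgebra K (Derivation K (MvPolynomial (Fin n) K) (MvPolynomial (Fin n) K)))
    (hdim : Module.finrank K L = n)
    (hbasic : ∀ v : Module.Basis (Fin n) K L,
      ∃ B : Module.Basis (Fin n) (MvPolynomial (Fin n) K)
        (Derivation K (MvPolynomial (Fin n) K) (MvPolynomial (Fin n) K)),
      ∀ i, B i = (v i : Derivation K (MvPolynomial (Fin n) K) (MvPolynomial (Fin n) K)))
    (hnil : LieRing.IsNilpotent L)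
    (D : Derivation K (MvPolynomial (Fin n) K) (MvPolynomial (Fin n) K)) (hD : D ∈ L) :
    ∑ j, pderiv j (D (X j)) = 0 := by
  rcases n.eq_zero_or_pos with rfl | hn
  · simp
  have : Module.Finite K L := Module.finite_of_finrank_pos (by rwa [hdim])
  let v := Module.finBasisOfFinrankEq K L hdim
  obtain ⟨B, hB⟩ := hbasic v
  have htrace : LinearMap.trace K L (LieAlgebra.ad K L ⟨D, hD⟩) = 0 :=
    (LinearMap.isNilpotent_trace_of_isNilpotent
      (LieModule.isNilpotent_toEnd_of_isNilpotent K L L _)).eq_zero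
  have hdiv := C_trace_ad_eq_neg_divergence v B hB ⟨D, hD⟩
  rwa [htrace, map_zero, eq_comm, neg_eq_zero] at hdiv

/-- If `L` is a basic Lie subalgebra of `W_n(K) = Der_K(K[x_1, ..., x_n])` (an
`n`-dimensional Lie subalgebra every `K`-basis of which is a basis of the free
`R`-module of derivations) which is nilpotent as a Lie algebra, then every element
`D` of `L` has divergence zero: `∑ j, ∂(D x_j)/∂x_j = 0`. -/
theorem stmt2 (n : ℕ) (K : Type*) [Field K] [CharZero K]
    (L : LieSubalgebra K (Derivation K (MvPolynomial (Fin n) K) (MvPolynomial (Fin n) K)))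
    (hdim : Module.finrank K L = n)
    (hbasic : ∀ v : Module.Basis (Fin n) K L,
      ∃ B : Module.Basis (Fin n) (MvPolynomial (Fin n) K)
        (Derivation K (MvPolynomial (Fin n) K) (MvPolynomial (Fin n) K)),
      ∀ i, B i = (v i : Derivation K (MvPolynomial (Fin n) K) (MvPolynomial (Fin n) K)))
    (hnil : LieRing.IsNilpotent L)
    (D : Derivation K (MvPolynomial (Fin n) K) (MvPolynomial (Fin n) K)) (hD : D ∈ L) :
    ∑ j, pderiv j (D (X j)) = 0 :=
  stmt2_general n K L hdim hbasic hnil D hD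
end

section
/- Let L be a finite-dimensional nilpotent Lie algebra of dimension n over K (char 0), R = K[x_1,...,x_n], and w̄ = sum_i w_i ⊗ l_i ∈ R ⊗_K L with det of the Jacobian matrix J(w_1,...,w_n) equal to a nonzero constant c ∈ K*. Define b̄_p = sum_{i≥1} (1/i!) (ad w̄)^{i-1}(∂w̄/∂x_p) for p = 1,...,n, where ∂w̄/∂x_p = sum_i (∂w_i/∂x_p) ⊗ l_i. Then {b̄_1,...,b̄_n} is a basis of the free R-module R ⊗_K L, and writing b̄_p = sum_i b_{pi} ⊗ l_i, det(b_{pi}) = c ∈ K*. -/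
open scoped TensorProduct
open MvPolynomial

/-! The family `b̄` is the image of `∂w̄` under `φ = ∑ (i+1)!⁻¹ (ad w̄)^i`, which is unipotent
since `ad w̄` is nilpotent; over the reduced ring `R` this forces `det φ = 1`. Hence the
determinant of `b̄` in the basis `1 ⊗ l_i` equals that of `∂w̄`, the Jacobian `c`, a unit, so `b̄`
is a basis. -/

theorem Matrix.det_one_add_of_isNilpotent {R n : Type*} [CommRing R] [IsReduced R]
    [Fintype n] [DecidableEq n] {N : Matrix n n R} (hN : IsNilpotent N) :
    (1 + N).det = 1 := by
  have hchar : N.charpoly = Polynomial.X ^ Fintype.card n := by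
    refine sub_eq_zero.mp (Polynomial.ext fun i => ?_)
    have hnil := isNilpotent_charpoly_sub_pow_of_isNilpotent hN
    simpa using (Polynomial.isNilpotent_iff.mp hnil i).eq_zero
  have heval := N.eval_charpoly (-1)
  rw [hchar, Polynomial.eval_pow, Polynomial.eval_X, map_neg, _root_.map_one,
    ← neg_add', Matrix.det_neg] at heval
  exact ((isUnit_one.neg).pow _).mul_left_cancel (heval.symm.trans (mul_one _).symm)

theorem LinearMap.det_eq_one_of_isNilpotent_sub_one {R M : Type*} [CommRing R] [IsReduced R]
    [AddCommGroup M] [Module R M] [Module.Free R M] [Module.Finite R M]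
    {f : Module.End R M} (hf : IsNilpotent (f - 1)) : LinearMap.det f = 1 := by
  classical
  let b := Module.Free.chooseBasis R M
  rw [← LinearMap.det_toMatrix b, ← add_sub_cancel (1 : Module.End R M) f,
    map_add, LinearMap.toMatrix_one]
  exact Matrix.det_one_add_of_isNilpotent (hf.map (LinearMap.toMatrixAlgEquiv b))

theorem isNilpotent_sum_range_smul_pow_sub_one {R A : Type*} [CommSemiring R] [Ring A]
    [Algebra R A] {f : A} {m : ℕ} (hf : f ^ m = 0) {a : ℕ → R} (ha : a 0 = 1) :
    IsNilpotent (∑ i ∈ Finset.range m, a i • f ^ i - 1) := by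
  cases m with
  | zero =>
    have : Subsingleton A := subsingleton_of_zero_eq_one (by simpa using hf.symm)
    exact ⟨1, Subsingleton.elim _ _⟩
  | succ k =>
    have hsum : ∑ i ∈ Finset.range (k + 1), a i • f ^ i - 1 =
        f * ∑ i ∈ Finset.range k, a (i + 1) • f ^ i := by
      rw [Finset.sum_range_succ', pow_zero, ha, one_smul, add_sub_cancel_right, Finset.mul_sum]
      exact Finset.sum_congr rfl fun i _ => by rw [mul_smul_comm, pow_succ']
    rw [hsum]
    refine Commute.isNilpotent_mul_right ?_ ⟨k + 1, hf⟩
    exact Commute.sum_right _ _ _ fun i _ => ((Commute.refl f).pow_right i).smul_right _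

namespace Module.Basis

variable {ι K L : Type*} [Fintype ι] [CommSemiring K] [AddCommMonoid L] [Module K L]
  {A : Type*} [CommSemiring A] [Algebra K A] (l : Basis ι K L)

theorem baseChange_repr_sum_tmul (a : ι → A) (i : ι) :
    (l.baseChange A).repr (∑ j, a j ⊗ₜ[K] l j) i = a i := by
  classical
  simp [Finsupp.single_apply]

theorem sum_baseChange_repr_tmul (x : A ⊗[K] L) :
    ∑ i, (l.baseChange A).repr x i ⊗ₜ[K] l i = x := by
  conv_rhs => rw [← (l.baseChange A).sum_repr x]
  simp [TensorProduct.smul_tmul']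

end Module.Basis

theorem stmt10_general (n : ℕ) (K L : Type*) [Field K]
    [LieRing L] [LieAlgebra K L]
    (l : Module.Basis (Fin n) K L)
    (w : Fin n → MvPolynomial (Fin n) K) (c : K) (hc : c ≠ 0)
    (hJac : (Matrix.det (fun i j => pderiv j (w i))) = MvPolynomial.C c)
    (wbar : (MvPolynomial (Fin n) K) ⊗[K] L)
    (m : ℕ)
    (hm : (LieAlgebra.ad (MvPolynomial (Fin n) K)
      ((MvPolynomial (Fin n) K) ⊗[K] L) wbar) ^ m = 0)
    (bbar : Fin n → (MvPolynomial (Fin n) K) ⊗[K] L)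
    (hbbar : ∀ p, bbar p = ∑ i ∈ Finset.range m,
      ((MvPolynomial.C (((Nat.factorial (i + 1) : K))⁻¹) : MvPolynomial (Fin n) K)) •
        (((LieAlgebra.ad (MvPolynomial (Fin n) K)
          ((MvPolynomial (Fin n) K) ⊗[K] L) wbar) ^ i)
          (∑ j, (pderiv p (w j)) ⊗ₜ[K] l j))) :
    ∃ (B : Module.Basis (Fin n) (MvPolynomial (Fin n) K) ((MvPolynomial (Fin n) K) ⊗[K] L))
      (b : Matrix (Fin n) (Fin n) (MvPolynomial (Fin n) K)),
      (∀ p, B p = bbar p) ∧ (∀ p, bbar p = ∑ i, b p i ⊗ₜ[K] l i) ∧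
        b.det = MvPolynomial.C c := by
  let e := l.baseChange (MvPolynomial (Fin n) K)
  let φ : Module.End (MvPolynomial (Fin n) K) ((MvPolynomial (Fin n) K) ⊗[K] L) :=
    ∑ i ∈ Finset.range m, (C ((Nat.factorial (i + 1) : K))⁻¹ : MvPolynomial (Fin n) K) •
      LieAlgebra.ad (MvPolynomial (Fin n) K) ((MvPolynomial (Fin n) K) ⊗[K] L) wbar ^ i
  let dwbar : Fin n → (MvPolynomial (Fin n) K) ⊗[K] L := fun p => ∑ j, pderiv p (w j) ⊗ₜ[K] l j
  have hbbar_eq : bbar = φ ∘ dwbar := funext fun p => by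
    simp only [hbbar, φ, dwbar, Function.comp_apply, LinearMap.sum_apply, LinearMap.smul_apply]
  have : Module.Free (MvPolynomial (Fin n) K) ((MvPolynomial (Fin n) K) ⊗[K] L) := .of_basis e
  have : Module.Finite (MvPolynomial (Fin n) K) ((MvPolynomial (Fin n) K) ⊗[K] L) := .of_basis e
  have hφ : LinearMap.det φ = 1 :=
    LinearMap.det_eq_one_of_isNilpotent_sub_one
      (isNilpotent_sum_range_smul_pow_sub_one hm (by simp))
  have hdwbar : e.det dwbar = C c := by
    rw [e.det_apply, ← hJac]
    exact congrArg Matrix.det (Matrix.ext fun i p => l.baseChange_repr_sum_tmul _ i)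
  have hdet : e.det bbar = C c := by rw [hbbar_eq, e.det_comp, hφ, one_mul, hdwbar]
  obtain ⟨hli, hspan⟩ := e.is_basis_iff_det.mpr (hdet ▸ hc.isUnit.map C)
  refine ⟨.mk hli hspan.ge, (e.toMatrix bbar).transpose, fun p => Module.Basis.mk_apply _ _ p,
    fun p => (l.sum_baseChange_repr_tmul (bbar p)).symm, ?_⟩
  rw [Matrix.det_transpose, ← e.det_apply, hdet]

/-- Let `L` be a nilpotent Lie algebra of dimension `n` over a field `K` of characteristic
zero with basis `l_1, ..., l_n`, let `R = K[x_1, ..., x_n]`, and let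
`w̄ = ∑ i, w i ⊗ l i ∈ R ⊗[K] L` with Jacobian determinant `det (∂w_i/∂x_j) = C c`, `c ∈ K*`.
Define `b̄_p = ∑_{i ≥ 1} (1/i!) (ad w̄)^(i-1) (∂w̄/∂x_p)` (a finite sum since `ad w̄` is
nilpotent, say `(ad w̄)^m = 0`).  Then `{b̄_1, ..., b̄_n}` is a basis of the free `R`-module
`R ⊗[K] L` and, writing `b̄_p = ∑ i, b p i ⊗ l i`, we have `det (b p i) = C c`. -/
theorem stmt10 (n : ℕ) (K L : Type*) [Field K] [CharZero K]
    [LieRing L] [LieAlgebra K L]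
    (l : Module.Basis (Fin n) K L)
    (hnil : LieRing.IsNilpotent L)
    (w : Fin n → MvPolynomial (Fin n) K) (c : K) (hc : c ≠ 0)
    (hJac : (Matrix.det (fun i j => pderiv j (w i))) = MvPolynomial.C c)
    (wbar : (MvPolynomial (Fin n) K) ⊗[K] L)
    (hwbar : wbar = ∑ i, w i ⊗ₜ[K] l i)
    (m : ℕ)
    (hm : (LieAlgebra.ad (MvPolynomial (Fin n) K)
      ((MvPolynomial (Fin n) K) ⊗[K] L) wbar) ^ m = 0)
    (bbar : Fin n → (MvPolynomial (Fin n) K) ⊗[K] L)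
    (hbbar : ∀ p, bbar p = ∑ i ∈ Finset.range m,
      ((MvPolynomial.C (((Nat.factorial (i + 1) : K))⁻¹) : MvPolynomial (Fin n) K)) •
        (((LieAlgebra.ad (MvPolynomial (Fin n) K)
          ((MvPolynomial (Fin n) K) ⊗[K] L) wbar) ^ i)
          (∑ j, (pderiv p (w j)) ⊗ₜ[K] l j))) :
    ∃ (B : Module.Basis (Fin n) (MvPolynomial (Fin n) K) ((MvPolynomial (Fin n) K) ⊗[K] L))
      (b : Matrix (Fin n) (Fin n) (MvPolynomial (Fin n) K)),
      (∀ p, B p = bbar p) ∧ (∀ p, bbar p = ∑ i, b p i ⊗ₜ[K] l i) ∧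
        b.det = MvPolynomial.C c :=
  stmt10_general n K L l w c hc hJac wbar m hm bbar hbbar
end
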